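/- Let n ≥ 2 and let v = (n/(n+1), -1/(n+1), ..., -1/(n+1)) ∈ ℝ^(n+1). For every P ∈ A_n that is not a real scalar multiple of v, the distance from P to the line ℝ·v is at least sqrt(1 - 1/n), and this bound is attained for some P ∈ A_n (for example P = e_1 - e_2). Consequently, the minimal distance between two distinct parallel lines of the form u + P + ℝ·v, u + Q + ℝ·v with P, Q ∈ A_n is sqrt(1 - 1/n). -/

import Mathlib

/-- The lattice `A_n = ℤ^(n+1) ∩ H_n`. -/
def Alat (n : ℕ) : Set (EuclideanSpace ℝ (Fin (n + 1))) :=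
  {x | (∀ k, ∃ m : ℤ, x k = (m : ℝ)) ∧ ∑ i, x i = 0}

/-- The vector `v = (n/(n+1), -1/(n+1), …, -1/(n+1))`, a shortest non-zero
vector of `A*_n`. -/
noncomputable def v (n : ℕ) : EuclideanSpace ℝ (Fin (n + 1)) :=
  WithLp.toLp 2 (fun j => if j = 0 then (n : ℝ) / ((n : ℝ) + 1) else -1 / ((n : ℝ) + 1))

/-- The line `ℝ·v` through the origin in direction `v`. -/
noncomputable def lineV (n : ℕ) : Set (EuclideanSpace ℝ (Fin (n + 1))) :=
  {y | ∃ t : ℝ, y = t • v n}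

/-- The vector `e₁ - e₂ ∈ A_n`. -/
noncomputable def e12 (n : ℕ) : EuclideanSpace ℝ (Fin (n + 1)) :=
  WithLp.toLp 2 (fun k => if k = 0 then 1 else if k = 1 then -1 else 0)

/-! For `x` with coordinate sum zero, `⟪v, x⟫ = x₀` and `‖v‖² = n / (n + 1)`, so the squared
distance from `x` to `ℝ·v` is `‖x‖² - (n + 1) / n · x₀²`. With `q = (x₁, …, xₙ)` and `x₀ = -∑ q`
this is `(n ∑ q² - (∑ q)²) / n = ∑ᵢ ∑ⱼ (qᵢ - qⱼ)² / (2n)`. For `x ∈ A_n` off the line, `q` is a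
non-constant integer vector; if `k` of its entries equal `q_a` and `n - k ≥ 1` do not, the double
sum is at least `2k(n - k) ≥ 2(n - 1)`. For `e₁ - e₂` one has `q = (-1, 0, …, 0)` and equality. -/

open Finset RealInnerProductSpace

section LineDistance

variable {𝕜 E : Type*} [RCLike 𝕜] [NormedAddCommGroup E] [InnerProductSpace 𝕜 E]

theorem Submodule.infDist_eq_norm_sub_starProjection (K : Submodule 𝕜 E)
    [K.HasOrthogonalProjection] (x : E) :
    Metric.infDist x K = ‖x - K.starProjection x‖ := by
  rw [Metric.infDist_eq_iInf, K.starProjection_minimal]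
  simp only [dist_eq_norm]
  rfl

end LineDistance

section RealLineDistance

variable {E : Type*} [NormedAddCommGroup E] [InnerProductSpace ℝ E]

theorem infDist_span_singleton_sq (x v : E) :
    Metric.infDist x (ℝ ∙ v) ^ 2 = ‖x‖ ^ 2 - ⟪v, x⟫ ^ 2 / ‖v‖ ^ 2 := by
  rw [Submodule.infDist_eq_norm_sub_starProjection, Submodule.starProjection_singleton,
    norm_sub_sq_real, inner_smul_right, norm_smul, real_inner_comm]
  rcases eq_or_ne v 0 with rfl | hv
  · simp
  · have : ‖v‖ ≠ 0 := norm_ne_zero_iff.2 hv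
    simp only [Real.norm_eq_abs, mul_pow, sq_abs, RCLike.ofReal_real_eq_id, id]
    field_simp
    ring

end RealLineDistance

section SumSq

variable {ι : Type*} [Fintype ι]

theorem sum_sum_sub_sq {R : Type*} [CommRing R] (q : ι → R) :
    ∑ i, ∑ j, (q i - q j) ^ 2 = 2 * (Fintype.card ι * ∑ i, q i ^ 2 - (∑ i, q i) ^ 2) := by
  simp only [sub_sq, sum_add_distrib, sum_sub_distrib, sum_const, card_univ, ← mul_sum,
    ← sum_mul, nsmul_eq_mul]
  ring

theorem two_mul_card_eq_mul_card_ne_le_sum_sum_sub_sq [DecidableEq ι] (q : ι → ℤ) (c : ℤ) :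
    2 * (#{i | q i = c} * #{i | q i ≠ c} : ℤ) ≤ ∑ i, ∑ j, (q i - q j) ^ 2 := by
  have hpair (i j : ι) : (if q i = c then 1 else 0) * (if q j ≠ c then 1 else 0) +
      (if q j = c then 1 else 0) * (if q i ≠ c then 1 else 0) ≤ (q i - q j) ^ 2 := by
    have hne : q i ≠ q j → 1 ≤ (q i - q j) ^ 2 := fun h =>
      (one_le_sq_iff_one_le_abs _).2 (Int.one_le_abs (sub_ne_zero.2 h))
    split_ifs <;> first | positivity | (apply hne; omega)
  calc 2 * (#{i | q i = c} * #{i | q i ≠ c} : ℤ)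
      = ∑ i, ∑ j, ((if q i = c then 1 else 0) * (if q j ≠ c then 1 else 0) +
          (if q j = c then 1 else 0) * (if q i ≠ c then 1 else 0)) := by
        simp only [sum_add_distrib, ← sum_mul_sum, sum_boole]
        rw [sum_comm, ← sum_mul_sum]
        simp only [sum_boole]
        ring
    _ ≤ _ := sum_le_sum fun i _ => sum_le_sum fun j _ => hpair i j

theorem card_sub_one_le_card_mul_sum_sq_sub_sq_sum (q : ι → ℤ) {a b : ι} (hab : q a ≠ q b) :
    (Fintype.card ι : ℤ) - 1 ≤ Fintype.card ι * ∑ i, q i ^ 2 - (∑ i, q i) ^ 2 := by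
  classical
  have hcard : #{i | q i = q a} + #{i | q i ≠ q a} = Fintype.card ι :=
    card_filter_add_card_filter_not _
  have ha : 1 ≤ #{i | q i = q a} := card_pos.2 ⟨a, by simp⟩
  have hb : 1 ≤ #{i | q i ≠ q a} := card_pos.2 ⟨b, by simp [Ne.symm hab]⟩
  have hpairs := two_mul_card_eq_mul_card_ne_le_sum_sum_sub_sq q (q a)
  rw [sum_sum_sub_sq, ← hcard] at hpairs
  rw [← hcard]
  push_cast at hpairs ⊢
  nlinarith [mul_nonneg (sub_nonneg.2 (Nat.one_le_cast.2 ha) : (0 : ℤ) ≤ _ - 1)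
    (sub_nonneg.2 (Nat.one_le_cast.2 hb) : (0 : ℤ) ≤ _ - 1)]

end SumSq

section LineV

variable {n : ℕ}

theorem v_apply_zero : v n 0 = n / (n + 1) := by simp [v]

theorem v_apply_succ (j : Fin n) : v n j.succ = -1 / (n + 1) := by simp [v]

theorem sum_v : ∑ i, v n i = 0 := by
  rw [Fin.sum_univ_succ]
  simp only [v_apply_zero, v_apply_succ, sum_const, card_univ, Fintype.card_fin, nsmul_eq_mul]
  field_simp
  ring

theorem inner_v_of_sum_eq_zero {x : EuclideanSpace ℝ (Fin (n + 1))} (hx : ∑ i, x i = 0) :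
    ⟪v n, x⟫ = x 0 := by
  have hx' : ∑ j : Fin n, x j.succ = -x 0 := by rw [Fin.sum_univ_succ] at hx; linarith
  rw [EuclideanSpace.inner_eq_star_dotProduct]
  simp only [dotProduct, Fin.sum_univ_succ, star_trivial, v_apply_zero, v_apply_succ,
    ← sum_mul, hx']
  field_simp

theorem norm_v_sq : ‖v n‖ ^ 2 = n / (n + 1) := by
  rw [← real_inner_self_eq_norm_sq, inner_v_of_sum_eq_zero sum_v, v_apply_zero]

theorem lineV_eq_span : lineV n = ℝ ∙ v n := by
  ext x
  simp [lineV, Submodule.mem_span_singleton, eq_comm]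

theorem infDist_lineV_sq {x : EuclideanSpace ℝ (Fin (n + 1))} (hn : n ≠ 0) (hx : ∑ i, x i = 0) :
    Metric.infDist x (lineV n) ^ 2 = ‖x‖ ^ 2 - (n + 1) / n * x 0 ^ 2 := by
  rw [lineV_eq_span, infDist_span_singleton_sq, inner_v_of_sum_eq_zero hx, norm_v_sq]
  field_simp

theorem card_mul_infDist_lineV_sq {x : EuclideanSpace ℝ (Fin (n + 1))} (hn : n ≠ 0)
    (hx : ∑ i, x i = 0) :
    n * Metric.infDist x (lineV n) ^ 2 =
      n * ∑ j : Fin n, x j.succ ^ 2 - (∑ j : Fin n, x j.succ) ^ 2 := by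
  have hx' : ∑ j : Fin n, x j.succ = -x 0 := by rw [Fin.sum_univ_succ] at hx; linarith
  rw [infDist_lineV_sq hn hx, EuclideanSpace.norm_sq_eq, Fin.sum_univ_succ, hx']
  simp only [Real.norm_eq_abs, sq_abs]
  field_simp
  ring

theorem smul_v_eq_of_sum_eq_zero {x : EuclideanSpace ℝ (Fin (n + 1))} {c : ℝ}
    (hx : ∑ i, x i = 0) (hc : ∀ j : Fin n, x j.succ = c) : (-(n + 1) * c) • v n = x := by
  have hx0 : x 0 = -n * c := by
    simp only [Fin.sum_univ_succ, hc, sum_const, card_univ, Fintype.card_fin, nsmul_eq_mul] at hx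
    linarith
  ext i
  refine Fin.cases ?_ (fun j => ?_) i
  · simp only [PiLp.smul_apply, smul_eq_mul, v_apply_zero, hx0]
    field_simp
  · simp only [PiLp.smul_apply, smul_eq_mul, v_apply_succ, hc]
    field_simp

end LineV

section Alat

variable {n : ℕ}

theorem zero_mem_Alat : (0 : EuclideanSpace ℝ (Fin (n + 1))) ∈ Alat n :=
  ⟨fun _ => ⟨0, by simp⟩, by simp⟩

theorem sub_mem_Alat {P Q : EuclideanSpace ℝ (Fin (n + 1))} (hP : P ∈ Alat n) (hQ : Q ∈ Alat n) :
    P - Q ∈ Alat n := by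
  refine ⟨fun k => ?_, by simp [sum_sub_distrib, hP.2, hQ.2]⟩
  obtain ⟨a, ha⟩ := hP.1 k
  obtain ⟨b, hb⟩ := hQ.1 k
  exact ⟨a - b, by simp [ha, hb]⟩

theorem sqrt_one_sub_inv_le_infDist_lineV {P : EuclideanSpace ℝ (Fin (n + 1))} (hn : n ≠ 0)
    (hP : P ∈ Alat n) (hPl : P ∉ lineV n) :
    √(1 - 1 / n) ≤ Metric.infDist P (lineV n) := by
  obtain ⟨hint, hsum⟩ := hP
  choose m hm using hint
  obtain ⟨a, b, hab⟩ : ∃ a b : Fin n, m a.succ ≠ m b.succ := by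
    by_contra! hconst
    exact hPl ⟨_, (smul_v_eq_of_sum_eq_zero hsum (c := P (Fin.succ ⟨0, Nat.pos_of_ne_zero hn⟩))
      fun j => by rw [hm, hm, hconst]).symm⟩
  have hbound := card_sub_one_le_card_mul_sum_sq_sub_sq_sum (fun j : Fin n => m j.succ) hab
  have hid := card_mul_infDist_lineV_sq hn hsum
  simp only [hm, Fintype.card_fin] at hid hbound
  have hnR : (0 : ℝ) < n := by positivity
  rw [Real.sqrt_le_left Metric.infDist_nonneg, ← mul_le_mul_iff_of_pos_left hnR, hid]
  calc (n : ℝ) * (1 - 1 / n) = ((n - 1 : ℤ) : ℝ) := by push_cast; field_simp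
    _ ≤ _ := by exact_mod_cast hbound

theorem e12_apply_zero : e12 n 0 = 1 := by simp [e12]

theorem e12_succ_apply_one : e12 (n + 1) 1 = -1 := by simp [e12]

theorem e12_succ_apply_succ_succ (j : Fin n) : e12 (n + 1) j.succ.succ = 0 := by
  have : j.succ.succ ≠ 1 := by
    rw [← Fin.succ_zero_eq_one, Ne, Fin.succ_inj]
    exact Fin.succ_ne_zero j
  simp [e12, Fin.succ_ne_zero, this]

theorem sum_e12_succ (hn : n ≠ 0) : ∑ j : Fin n, e12 n j.succ = -1 := by
  obtain ⟨k, rfl⟩ := Nat.exists_eq_succ_of_ne_zero hn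
  simp [Fin.sum_univ_succ, e12_succ_apply_one, e12_succ_apply_succ_succ]

theorem sum_e12_succ_sq (hn : n ≠ 0) : ∑ j : Fin n, e12 n j.succ ^ 2 = 1 := by
  obtain ⟨k, rfl⟩ := Nat.exists_eq_succ_of_ne_zero hn
  simp [Fin.sum_univ_succ, e12_succ_apply_one, e12_succ_apply_succ_succ]

theorem sum_e12 (hn : n ≠ 0) : ∑ i, e12 n i = 0 := by
  rw [Fin.sum_univ_succ, e12_apply_zero, sum_e12_succ hn, add_neg_cancel]

theorem e12_mem_Alat (hn : n ≠ 0) : e12 n ∈ Alat n := by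
  refine ⟨fun k => ?_, sum_e12 hn⟩
  simp only [e12]
  split_ifs
  exacts [⟨1, by simp⟩, ⟨-1, by simp⟩, ⟨0, by simp⟩]

theorem infDist_e12_lineV (hn : n ≠ 0) : Metric.infDist (e12 n) (lineV n) = √(1 - 1 / n) := by
  have hid := card_mul_infDist_lineV_sq hn (sum_e12 hn)
  rw [sum_e12_succ hn, sum_e12_succ_sq hn] at hid
  rw [← Real.sqrt_sq Metric.infDist_nonneg]
  congr 1
  have hnR : (n : ℝ) ≠ 0 := by positivity
  field_simp
  linarith

theorem e12_not_mem_lineV (hn : 2 ≤ n) : e12 n ∉ lineV n := fun h => by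
  have hdist := infDist_e12_lineV (n := n) (by omega)
  rw [Metric.infDist_zero_of_mem h, eq_comm, Real.sqrt_eq_zero', sub_nonpos,
    le_div_iff₀ (by positivity)] at hdist
  have hnR : (2 : ℝ) ≤ n := by exact_mod_cast hn
  linarith

end Alat

theorem parallel_lines_min_dist (n : ℕ) (hn : 2 ≤ n) :
    (∀ P ∈ Alat n, P ∉ lineV n →
      Real.sqrt (1 - 1 / (n : ℝ)) ≤ Metric.infDist P (lineV n)) ∧
    (e12 n ∈ Alat n ∧ e12 n ∉ lineV n ∧
      Metric.infDist (e12 n) (lineV n) = Real.sqrt (1 - 1 / (n : ℝ))) ∧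
    IsLeast {D : ℝ | ∃ P ∈ Alat n, ∃ Q ∈ Alat n, P - Q ∉ lineV n ∧
        D = Metric.infDist (P - Q) (lineV n)}
      (Real.sqrt (1 - 1 / (n : ℝ))) := by
  have hn0 : n ≠ 0 := by omega
  have hlower : ∀ P ∈ Alat n, P ∉ lineV n → √(1 - 1 / (n : ℝ)) ≤ Metric.infDist P (lineV n) :=
    fun _ => sqrt_one_sub_inv_le_infDist_lineV hn0
  refine ⟨hlower, ⟨e12_mem_Alat hn0, e12_not_mem_lineV hn, infDist_e12_lineV hn0⟩, ?_, ?_⟩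
  · refine ⟨e12 n, e12_mem_Alat hn0, 0, zero_mem_Alat, ?_, ?_⟩ <;> rw [sub_zero]
    exacts [e12_not_mem_lineV hn, (infDist_e12_lineV hn0).symm]
  · rintro _ ⟨P, hP, Q, hQ, hPQ, rfl⟩
    exact hlower _ (sub_mem_Alat hP hQ) hPQ
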